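/- Let A be a Hilbert algebra and φ a multiplier on A. Then φ is monotone (x ≤ y implies φ(x) ≤ φ(y)) if and only if its kernel K_φ = {x ∈ A : φ(x) = 1} is a filter of A. -/

import Mathlib

/-!
Every multiplier satisfies `φ (φ x → x) = φ x → φ x = 1`, so `φ x → x` always lies in the kernel.
If the kernel is a filter it is upward closed, and for `x ≤ y` it contains `φ x → y ≥ φ x → x`;
hence `φ x → φ y = φ (φ x → y) = 1`. Conversely, a monotone `φ` has an upward closed kernel, and
`x ≤ (x → y) → y` gives `x → y ≤ φ y` whenever `φ x = 1`. For `x` and `x → y` in the kernel this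
yields first `φ (φ y) = 1`, then `φ y → y ≤ φ y`, so `φ y → y ≤ y` and `y` is in the kernel.
-/

/-- A Hilbert algebra: a set with implication `imp` and constant `one`. -/
class HilbertAlgebra (A : Type*) where
  imp : A → A → A
  one : A
  imp_one : ∀ x y : A, imp x (imp y x) = one
  imp_distrib : ∀ x y z : A,
    imp (imp x (imp y z)) (imp (imp x y) (imp x z)) = one
  imp_antisymm : ∀ x y : A, imp x y = one → imp y x = one → x = y

namespace HilbertAlgebra

variable {A : Type*} [HilbertAlgebra A]

/-- The natural order of a Hilbert algebra: `x ≤ y` iff `x → y = 1`. -/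
def le (x y : A) : Prop := imp x y = one

/-- A multiplier on a Hilbert algebra. -/
def IsMultiplier (φ : A → A) : Prop := ∀ x y : A, φ (imp x y) = imp x (φ y)

/-- A filter of a Hilbert algebra. -/
def IsFilter (J : Set A) : Prop :=
  (one : A) ∈ J ∧ ∀ x y : A, x ∈ J → imp x y ∈ J → y ∈ J

theorem eq_one_of_one_imp_eq_one {a : A} (h : imp one a = one) : a = one := by
  have h' := imp_one a one
  rw [h] at h'
  exact imp_antisymm a one h' h

theorem le_refl (x : A) : le x x := by
  have h := imp_distrib x (imp x x) x
  rw [imp_one x (imp x x), imp_one x x] at h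
  exact eq_one_of_one_imp_eq_one (eq_one_of_one_imp_eq_one h)

theorem le_one (x : A) : le x one := by
  have h := imp_one x x
  rwa [le_refl x] at h

theorem one_imp (a : A) : imp one a = a := by
  have h := imp_distrib (imp one a) one a
  rw [le_refl (imp one a), le_one (imp one a)] at h
  exact imp_antisymm _ _ (eq_one_of_one_imp_eq_one (eq_one_of_one_imp_eq_one h)) (imp_one a one)

theorem eq_one_of_one_le {a : A} (h : le one a) : a = one := by
  rwa [le, one_imp] at h

theorem le_of_le_of_le_imp {a b c : A} (hab : le a b) (habc : le a (imp b c)) : le a c := by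
  have h := imp_distrib a b c
  rwa [habc, hab, one_imp, one_imp] at h

theorem le_trans {a b c : A} (hab : le a b) (hbc : le b c) : le a c :=
  le_of_le_of_le_imp hab (by rw [le, hbc]; exact le_one a)

theorem imp_le_imp_left {b c : A} (a : A) (h : le b c) : le (imp a b) (imp a c) := by
  have h' := imp_distrib a b c
  rwa [h, le_one a, one_imp] at h'

theorem le_imp_imp (x y : A) : le x (imp (imp x y) y) := by
  have h := imp_distrib (imp x y) x y
  rw [le_refl (imp x y), one_imp] at h
  exact le_trans (imp_one x (imp x y)) h

theorem IsFilter.mem_of_le {J : Set A} (hJ : IsFilter J) {a b : A} (ha : a ∈ J) (hab : le a b) :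
    b ∈ J :=
  hJ.2 a b ha (hab ▸ hJ.1)

namespace IsMultiplier

variable {φ : A → A}

theorem map_one (hφ : IsMultiplier φ) : φ one = one := by
  have h := hφ (φ one) one
  rwa [le_one (φ one), le_refl (φ one)] at h

theorem map_imp_self (hφ : IsMultiplier φ) (x : A) : φ (imp (φ x) x) = one := by
  rw [hφ]
  exact le_refl (φ x)

theorem map_eq_one_of_le (hmono : ∀ x y : A, le x y → le (φ x) (φ y)) {a b : A}
    (ha : φ a = one) (hab : le a b) : φ b = one :=
  eq_one_of_one_le (ha ▸ hmono a b hab)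

theorem imp_le_map_of_map_eq_one (hφ : IsMultiplier φ)
    (hmono : ∀ x y : A, le x y → le (φ x) (φ y)) {x : A} (hx : φ x = one) (y : A) :
    le (imp x y) (φ y) := by
  have h := map_eq_one_of_le hmono hx (le_imp_imp x y)
  rwa [hφ] at h

end IsMultiplier

/-- A multiplier is monotone iff its kernel is a filter. -/
theorem multiplier_monotone_iff_kernel_filter (φ : A → A) (hφ : IsMultiplier φ) :
    (∀ x y : A, le x y → le (φ x) (φ y)) ↔
      IsFilter {x : A | φ x = one} := by
  constructor
  · intro hmono
    refine ⟨hφ.map_one, fun x y (hx : φ x = one) (hxy : φ (imp x y) = one) => ?_⟩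
    have hφy : φ (φ y) = one :=
      IsMultiplier.map_eq_one_of_le hmono hxy (hφ.imp_le_map_of_map_eq_one hmono hx y)
    have hle : le (imp (φ y) y) y :=
      le_of_le_of_le_imp (hφ.imp_le_map_of_map_eq_one hmono hφy y) (le_refl _)
    exact IsMultiplier.map_eq_one_of_le hmono (hφ.map_imp_self y) hle
  · intro hK x y hxy
    have h : φ (imp (φ x) y) = one :=
      hK.mem_of_le (hφ.map_imp_self x) (imp_le_imp_left (φ x) hxy)
    rwa [hφ] at h

end HilbertAlgebra
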